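/- arXiv:1105.0839 — 4 statements merged into one kernel-verified Lean document; each statement's English description precedes it below -/
import Mathlib

section
/- Let λ : E × [0,∞) → ℝ be bounded by C_λ and satisfy |λ(x,s) - λ(y,s)| ≤ [λ]₁|x-y| for s ≤ t*(x) ∧ t*(y), let h : E × [0,∞) → ℝ be bounded by C_h with |h(x,s) - h(y,s)| ≤ [h]₁|x-y| for s ≤ t*(x) ∧ t*(y), and let t* : E → [0, C_{t*}] be Lipschitz with constant [t*]. Setting Λ(x,s) = ∫₀ˢ λ(x,u)du, for all x, y ∈ E and t ≤ t*(x) ∧ t*(y): |∫_t^{t*(x)} h(x,s)e^{-Λ(x,s)} ds − ∫_t^{t*(y)} h(y,s)e^{-Λ(y,s)} ds| ≤ (C_{t*}[h]₁ + (C_{t*}²[λ]₁ + [t*])C_h)|x − y|. -/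
/-!
Write `f_z(s) = h(z,s) e^{-Λ(z,s)}` and `d = dist x y`, assume `t*(y) ≤ t*(x)` and split
`∫_t^{t*(x)} f_x` at `t*(y)`. On `[t, t*(y)]` we have `|Λ(x,s) - Λ(y,s)| ≤ [λ]₁ d s ≤ C_{t*} [λ]₁ d`,
and `u ↦ e^{-u}` is 1-Lipschitz and bounded by 1 on `[0, ∞)`, so there
`|f_x - f_y| ≤ [h]₁ d + C_h C_{t*} [λ]₁ d`. The remaining piece `[t*(y), t*(x)]` has length at
most `[t*] d`, and `|f_x| ≤ C_h` on it.
-/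

open MeasureTheory Real Set

lemma exp_neg_sub_exp_neg_le {u v : ℝ} (hu : 0 ≤ u) (huv : u ≤ v) :
    exp (-u) - exp (-v) ≤ v - u := by
  have hsplit : exp (-v) = exp (-u) * exp (-(v - u)) := by rw [← exp_add]; ring_nf
  have hlin := one_sub_le_exp_neg (v - u)
  have hle_one : exp (-u) ≤ 1 := exp_le_one_iff.2 (by linarith)
  nlinarith [exp_pos (-u)]

lemma abs_exp_neg_sub_exp_neg_le {u v : ℝ} (hu : 0 ≤ u) (hv : 0 ≤ v) :
    |exp (-u) - exp (-v)| ≤ |u - v| := by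
  wlog huv : u ≤ v generalizing u v
  · rw [abs_sub_comm, abs_sub_comm u]
    exact this hv hu (le_of_not_ge huv)
  rw [abs_of_nonneg (sub_nonneg.2 (exp_le_exp.2 (neg_le_neg huv))), abs_sub_comm,
    abs_of_nonneg (sub_nonneg.2 huv)]
  exact exp_neg_sub_exp_neg_le hu huv

lemma abs_mul_exp_neg_sub_mul_exp_neg_le {a b u v : ℝ} (hu : 0 ≤ u) (hv : 0 ≤ v) :
    |a * exp (-u) - b * exp (-v)| ≤ |a - b| + |b| * |u - v| :=
  calc |a * exp (-u) - b * exp (-v)|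
      = |(a - b) * exp (-u) + b * (exp (-u) - exp (-v))| := by ring_nf
    _ ≤ |(a - b) * exp (-u)| + |b * (exp (-u) - exp (-v))| := abs_add_le _ _
    _ = |a - b| * exp (-u) + |b| * |exp (-u) - exp (-v)| := by
      rw [abs_mul, abs_mul, abs_of_pos (exp_pos _)]
    _ ≤ |a - b| * 1 + |b| * |u - v| :=
      add_le_add (mul_le_mul_of_nonneg_left (exp_le_one_iff.2 (by linarith)) (abs_nonneg _))
        (mul_le_mul_of_nonneg_left (abs_exp_neg_sub_exp_neg_le hu hv) (abs_nonneg _))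
    _ = |a - b| + |b| * |u - v| := by ring

lemma intervalIntegrable_of_abs_le {f : ℝ → ℝ} (hf : Measurable f) {C : ℝ}
    (hC : ∀ s, |f s| ≤ C) (a b : ℝ) : IntervalIntegrable f volume a b :=
  (intervalIntegrable_const (c := C) : IntervalIntegrable (fun _ => C) volume a b).mono_fun'
    hf.aestronglyMeasurable (ae_of_all _ fun s => (Real.norm_eq_abs (f s)).trans_le (hC s))

lemma abs_integral_sub_integral_le_mul {f g : ℝ → ℝ} {a b K : ℝ} (hab : a ≤ b)
    (hf : IntervalIntegrable f volume a b) (hg : IntervalIntegrable g volume a b)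
    (hK : ∀ s ∈ Ioc a b, |f s - g s| ≤ K) :
    |(∫ s in a..b, f s) - ∫ s in a..b, g s| ≤ K * (b - a) := by
  have := intervalIntegral.norm_integral_le_of_norm_le_const (f := fun s => f s - g s)
    (C := K) fun s hs => by rw [uIoc_of_le hab] at hs; exact hK s hs
  rwa [Real.norm_eq_abs, abs_of_nonneg (sub_nonneg.2 hab),
    intervalIntegral.integral_sub hf hg] at this

lemma intervalIntegrable_mul_exp_neg_integral {g l : ℝ → ℝ} {a b : ℝ}
    (hg : IntervalIntegrable g volume a b) (hl : ∀ c d, IntervalIntegrable l volume c d) :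
    IntervalIntegrable (fun s => g s * exp (-∫ u in (0:ℝ)..s, l u)) volume a b :=
  hg.mul_continuousOn
    (continuous_exp.comp (intervalIntegral.continuous_primitive hl 0).neg).continuousOn

lemma abs_mul_exp_neg_integral_le {l : ℝ → ℝ} (hl : ∀ u, 0 ≤ l u) (a : ℝ) {s : ℝ}
    (hs : 0 ≤ s) :
    |a * exp (-∫ u in (0:ℝ)..s, l u)| ≤ |a| := by
  simpa using abs_mul_exp_neg_sub_mul_exp_neg_le (a := a) (b := 0)
    (intervalIntegral.integral_nonneg hs fun u _ => hl u) le_rfl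

lemma abs_mul_exp_neg_integral_sub_le {l₁ l₂ : ℝ → ℝ} {s K : ℝ} (a b : ℝ) (hs : 0 ≤ s)
    (hl₁ : IntervalIntegrable l₁ volume 0 s) (hl₂ : IntervalIntegrable l₂ volume 0 s)
    (hl₁_nonneg : ∀ u, 0 ≤ l₁ u) (hl₂_nonneg : ∀ u, 0 ≤ l₂ u)
    (hK : ∀ u ∈ Ioc 0 s, |l₁ u - l₂ u| ≤ K) :
    |a * exp (-∫ u in (0:ℝ)..s, l₁ u) - b * exp (-∫ u in (0:ℝ)..s, l₂ u)|
      ≤ |a - b| + |b| * (K * s) := by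
  have hdiff := abs_integral_sub_integral_le_mul hs hl₁ hl₂ hK
  rw [sub_zero] at hdiff
  exact (abs_mul_exp_neg_sub_mul_exp_neg_le
    (intervalIntegral.integral_nonneg hs fun u _ => hl₁_nonneg u)
    (intervalIntegral.integral_nonneg hs fun u _ => hl₂_nonneg u)).trans (by gcongr)

lemma abs_integral_sub_integral_le_of_le {f g : ℝ → ℝ} {t b a A B : ℝ} (htb : t ≤ b)
    (hba : b ≤ a) (hf₁ : IntervalIntegrable f volume t b)
    (hf₂ : IntervalIntegrable f volume b a)
    (hg : IntervalIntegrable g volume t b) (hA : ∀ s ∈ Ioc t b, |f s - g s| ≤ A)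
    (hB : ∀ s ∈ Ioc b a, |f s| ≤ B) :
    |(∫ s in t..a, f s) - ∫ s in t..b, g s| ≤ A * (b - t) + B * (a - b) := by
  have htail : |∫ s in b..a, f s| ≤ B * (a - b) := by
    simpa using abs_integral_sub_integral_le_mul (g := 0) hba hf₂ intervalIntegrable_const
      (by simpa using hB)
  rw [← intervalIntegral.integral_add_adjacent_intervals hf₁ hf₂]
  calc |(∫ s in t..b, f s) + (∫ s in b..a, f s) - ∫ s in t..b, g s|
      ≤ |(∫ s in t..b, f s) - ∫ s in t..b, g s| + |∫ s in b..a, f s| := by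
        rw [add_sub_right_comm]; exact abs_add_le _ _
    _ ≤ A * (b - t) + B * (a - b) :=
        add_le_add (abs_integral_sub_integral_le_mul htb hf₁ hg hA) htail

theorem stmt4_general {E : Type*} [MetricSpace E] (tstar : E → ℝ) (Ct Kt : ℝ)
    (htbd : ∀ x, tstar x ≤ Ct)
    (htLip : ∀ x y, |tstar x - tstar y| ≤ Kt * dist x y)
    (lam : E → ℝ → ℝ) (Clam Klam : ℝ)
    (hlmeas : ∀ x, Measurable (lam x))
    (hlnn : ∀ x s, 0 ≤ lam x s) (hlbd : ∀ x s, lam x s ≤ Clam)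
    (hlLip : ∀ x y s, 0 ≤ s → s ≤ min (tstar x) (tstar y) →
      |lam x s - lam y s| ≤ Klam * dist x y)
    (h : E → ℝ → ℝ) (Ch Kh : ℝ)
    (hhmeas : ∀ x, Measurable (h x))
    (hhbd : ∀ x s, |h x s| ≤ Ch)
    (hhLip : ∀ x y s, 0 ≤ s → s ≤ min (tstar x) (tstar y) →
      |h x s - h y s| ≤ Kh * dist x y)
    (Λ : E → ℝ → ℝ) (hΛ : ∀ x s, Λ x s = ∫ u in (0:ℝ)..s, lam x u) :
    ∀ x y t, 0 ≤ t → t ≤ min (tstar x) (tstar y) →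
      |(∫ s in t..(tstar x), h x s * Real.exp (-(Λ x s)))
        - (∫ s in t..(tstar y), h y s * Real.exp (-(Λ y s)))|
      ≤ (Ct * Kh + (Ct^2 * Klam + Kt) * Ch) * dist x y := by
  intro x y t ht htxy
  wlog hyx : tstar y ≤ tstar x generalizing x y
  · rw [abs_sub_comm, dist_comm]
    exact this y x (by rwa [min_comm]) (le_of_not_ge hyx)
  obtain ⟨htx, hty⟩ := le_min_iff.1 htxy
  obtain rfl : Λ = fun z s => ∫ u in (0:ℝ)..s, lam z u := funext₂ hΛ
  beta_reduce
  set d := dist x y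
  set f : E → ℝ → ℝ := fun z s => h z s * exp (-∫ u in (0:ℝ)..s, lam z u)
  have hlam_int (z : E) : ∀ a b, IntervalIntegrable (lam z) volume a b :=
    intervalIntegrable_of_abs_le (hlmeas z) fun s =>
      (abs_of_nonneg (hlnn z s)).trans_le (hlbd z s)
  have hf_int (z : E) (a b : ℝ) : IntervalIntegrable (f z) volume a b :=
    intervalIntegrable_mul_exp_neg_integral
      (intervalIntegrable_of_abs_le (hhmeas z) (hhbd z) a b) (hlam_int z)
  have hCt : 0 ≤ Ct := ht.trans (htx.trans (htbd x))
  have hCh : 0 ≤ Ch := (abs_nonneg _).trans (hhbd x t)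
  have hKh : 0 ≤ Kh * d := (abs_nonneg _).trans (hhLip x y t ht htxy)
  have hKlam : 0 ≤ Klam * d := (abs_nonneg _).trans (hlLip x y t ht htxy)
  have hnear : ∀ s ∈ Ioc t (tstar y), |f x s - f y s| ≤ Kh * d + Ch * (Klam * d * Ct) := by
    rintro s ⟨hts, hsy⟩
    have hs0 : 0 ≤ s := ht.trans hts.le
    have hsxy : s ≤ min (tstar x) (tstar y) := le_min (hsy.trans hyx) hsy
    calc |f x s - f y s| ≤ |h x s - h y s| + |h y s| * (Klam * d * s) :=
          abs_mul_exp_neg_integral_sub_le _ _ hs0 (hlam_int x 0 s)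
            (hlam_int y 0 s) (hlnn x) (hlnn y) fun u hu => hlLip x y u hu.1.le (hu.2.trans hsxy)
      _ ≤ Kh * d + Ch * (Klam * d * Ct) := by
          gcongr
          exacts [hhLip x y s hs0 hsxy, hhbd y s, hsy.trans (htbd y)]
  have hfar : ∀ s ∈ Ioc (tstar y) (tstar x), |f x s| ≤ Ch := fun s hs =>
    (abs_mul_exp_neg_integral_le (hlnn x) _ (ht.trans (hty.trans hs.1.le))).trans (hhbd x s)
  calc _ ≤ (Kh * d + Ch * (Klam * d * Ct)) * (tstar y - t) + Ch * (tstar x - tstar y) :=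
        abs_integral_sub_integral_le_of_le hty hyx (hf_int x _ _) (hf_int x _ _) (hf_int y _ _)
          hnear hfar
    _ ≤ (Kh * d + Ch * (Klam * d * Ct)) * Ct + Ch * (Kt * d) := by
        gcongr
        · linarith [htbd y]
        · exact (le_abs_self _).trans (htLip x y)
    _ = (Ct * Kh + (Ct ^ 2 * Klam + Kt) * Ch) * d := by ring

theorem stmt4 {E : Type*} [MetricSpace E] (tstar : E → ℝ) (Ct Kt : ℝ)
    (htnn : ∀ x, 0 ≤ tstar x) (htbd : ∀ x, tstar x ≤ Ct)
    (htLip : ∀ x y, |tstar x - tstar y| ≤ Kt * dist x y)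
    (lam : E → ℝ → ℝ) (Clam Klam : ℝ)
    (hlmeas : ∀ x, Measurable (lam x))
    (hlnn : ∀ x s, 0 ≤ lam x s) (hlbd : ∀ x s, lam x s ≤ Clam)
    (hlLip : ∀ x y s, 0 ≤ s → s ≤ min (tstar x) (tstar y) →
      |lam x s - lam y s| ≤ Klam * dist x y)
    (h : E → ℝ → ℝ) (Ch Kh : ℝ)
    (hhmeas : ∀ x, Measurable (h x))
    (hhbd : ∀ x s, |h x s| ≤ Ch)
    (hhLip : ∀ x y s, 0 ≤ s → s ≤ min (tstar x) (tstar y) →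
      |h x s - h y s| ≤ Kh * dist x y)
    (Λ : E → ℝ → ℝ) (hΛ : ∀ x s, Λ x s = ∫ u in (0:ℝ)..s, lam x u) :
    ∀ x y t, 0 ≤ t → t ≤ min (tstar x) (tstar y) →
      |(∫ s in t..(tstar x), h x s * Real.exp (-(Λ x s)))
        - (∫ s in t..(tstar y), h y s * Real.exp (-(Λ y s)))|
      ≤ (Ct * Kh + (Ct^2 * Klam + Kt) * Ch) * dist x y :=
  stmt4_general tstar Ct Kt htbd htLip lam Clam Klam hlmeas hlnn hlbd hlLip h Ch Kh hhmeas hhbd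
    hhLip Λ hΛ
end

section
/- Let t* : E → [0, C_{t*}] be Lipschitz with constant [t*], λ : E × [0,∞) → [0, C_λ] with |λ(x,s) - λ(y,s)| ≤ [λ]₁|x-y| for s ≤ t*(x) ∧ t*(y), and let H : E → ℝ be bounded by C_H and Lipschitz with constant [H]_* (interpreted as H(x) = h(Φ(x, t*(x)))). Setting Λ(x) = ∫₀^{t*(x)} λ(x,u)du, then for all x, y ∈ E: |e^{-Λ(x)} H(x) − e^{-Λ(y)} H(y)| ≤ ([H]_* + C_H(C_{t*}[λ]₁ + [t*]C_λ))|x − y|. -/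
open MeasureTheory

lemma exp_diff_le {a b : ℝ} (ha : 0 ≤ a) (hb : 0 ≤ b) :
    |Real.exp (-a) - Real.exp (-b)| ≤ |a - b| := by
  wlog h : a ≤ b generalizing a b
  · rw [abs_sub_comm, abs_sub_comm a b]; exact this hb ha (le_of_not_ge h)
  have h1 : Real.exp (-b) ≤ Real.exp (-a) := Real.exp_le_exp.mpr (by linarith)
  rw [abs_of_nonneg (by linarith), abs_of_nonpos (by linarith)]
  have h2 : Real.exp (-a) ≤ 1 := Real.exp_le_one_iff.mpr (by linarith)
  have h3 : 1 - (b - a) ≤ Real.exp (-(b - a)) := by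
    have := Real.add_one_le_exp (-(b - a)); linarith
  have h4 : Real.exp (-b) = Real.exp (-a) * Real.exp (-(b - a)) := by
    rw [← Real.exp_add]; ring_nf
  nlinarith [Real.exp_nonneg (-(b-a)), Real.exp_nonneg (-a)]

theorem stmt5 {E : Type*} [MetricSpace E] (tstar : E → ℝ) (Ct Kt : ℝ)
    (htnn : ∀ x, 0 ≤ tstar x) (htbd : ∀ x, tstar x ≤ Ct)
    (htLip : ∀ x y, |tstar x - tstar y| ≤ Kt * dist x y)
    (lam : E → ℝ → ℝ) (Clam Klam : ℝ)
    (hlmeas : ∀ x, Measurable (lam x))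
    (hlnn : ∀ x s, 0 ≤ lam x s) (hlbd : ∀ x s, lam x s ≤ Clam)
    (hlLip : ∀ x y s, 0 ≤ s → s ≤ min (tstar x) (tstar y) →
      |lam x s - lam y s| ≤ Klam * dist x y)
    (H : E → ℝ) (CH Kstar : ℝ)
    (hHbd : ∀ x, |H x| ≤ CH)
    (hHLip : ∀ x y, |H x - H y| ≤ Kstar * dist x y)
    (Λ : E → ℝ) (hΛ : ∀ x, Λ x = ∫ u in (0:ℝ)..(tstar x), lam x u) :
    ∀ x y, |Real.exp (-(Λ x)) * H x - Real.exp (-(Λ y)) * H y|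
      ≤ (Kstar + CH * (Ct * Klam + Kt * Clam)) * dist x y := by
  -- integrability of lam z on any interval
  have hint : ∀ (z : E) (a b : ℝ), IntervalIntegrable (lam z) volume a b := by
    intro z a b
    refine (intervalIntegrable_const (c := Clam)).mono_fun'
      ((hlmeas z).aestronglyMeasurable) ?_
    filter_upwards with s
    rw [Real.norm_eq_abs, abs_of_nonneg (hlnn z s)]
    exact hlbd z s
  -- nonnegativity of Λ
  have hΛnn : ∀ z, 0 ≤ Λ z := by
    intro z
    rw [hΛ z]
    exact intervalIntegral.integral_nonneg (htnn z) (fun u _ => hlnn z u)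
  -- key bound, asymmetric version
  have key : ∀ x y : E, tstar x ≤ tstar y →
      |Λ x - Λ y| ≤ (Ct * Klam + Kt * Clam) * dist x y := by
    intro x y hxy
    have hClam : 0 ≤ Clam := le_trans (hlnn x 0) (hlbd x 0)
    have hCt : 0 ≤ Ct := le_trans (htnn x) (htbd x)
    have hKd : 0 ≤ Klam * dist x y := by
      refine le_trans (abs_nonneg _) (hlLip x y 0 le_rfl ?_)
      exact le_min (htnn x) (htnn y)
    have hsplit : Λ y = (∫ u in (0:ℝ)..(tstar x), lam y u)
        + ∫ u in (tstar x)..(tstar y), lam y u := by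
      rw [hΛ y, ← intervalIntegral.integral_add_adjacent_intervals
        (hint y 0 (tstar x)) (hint y (tstar x) (tstar y))]
    have hdiff : Λ x - Λ y = (∫ u in (0:ℝ)..(tstar x), (lam x u - lam y u))
        - ∫ u in (tstar x)..(tstar y), lam y u := by
      rw [hsplit, hΛ x,
        intervalIntegral.integral_sub (hint x 0 (tstar x)) (hint y 0 (tstar x))]
      ring
    have h1 : |∫ u in (0:ℝ)..(tstar x), (lam x u - lam y u)|
        ≤ Klam * dist x y * Ct := by
      have := intervalIntegral.norm_integral_le_of_norm_le_const
        (C := Klam * dist x y) (f := fun u => lam x u - lam y u)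
        (a := (0:ℝ)) (b := tstar x) ?_
      · rw [Real.norm_eq_abs] at this
        refine le_trans this ?_
        have : |tstar x - 0| = tstar x := by
          rw [sub_zero, abs_of_nonneg (htnn x)]
        rw [this]
        exact mul_le_mul_of_nonneg_left (htbd x) hKd
      · intro u hu
        rw [Set.uIoc_of_le (htnn x)] at hu
        rw [Real.norm_eq_abs]
        exact hlLip x y u hu.1.le (le_min hu.2 (le_trans hu.2 hxy))
    have h2 : |∫ u in (tstar x)..(tstar y), lam y u|
        ≤ Clam * (Kt * dist x y) := by
      have := intervalIntegral.norm_integral_le_of_norm_le_const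
        (C := Clam) (f := fun u => lam y u) (a := tstar x) (b := tstar y) ?_
      · rw [Real.norm_eq_abs] at this
        refine le_trans this ?_
        refine mul_le_mul_of_nonneg_left ?_ hClam
        rw [abs_sub_comm]
        exact htLip x y
      · intro u _
        rw [Real.norm_eq_abs, abs_of_nonneg (hlnn y u)]
        exact hlbd y u
    calc |Λ x - Λ y| ≤ |∫ u in (0:ℝ)..(tstar x), (lam x u - lam y u)|
          + |∫ u in (tstar x)..(tstar y), lam y u| := by
          rw [hdiff]; exact abs_sub _ _
      _ ≤ Klam * dist x y * Ct + Clam * (Kt * dist x y) := add_le_add h1 h2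
      _ = (Ct * Klam + Kt * Clam) * dist x y := by ring
  -- symmetric version
  have key' : ∀ x y : E, |Λ x - Λ y| ≤ (Ct * Klam + Kt * Clam) * dist x y := by
    intro x y
    rcases le_total (tstar x) (tstar y) with h | h
    · exact key x y h
    · rw [abs_sub_comm, dist_comm]; exact key y x h
  intro x y
  have hCH : 0 ≤ CH := le_trans (abs_nonneg _) (hHbd x)
  have hex : Real.exp (-(Λ x)) ≤ 1 := Real.exp_le_one_iff.mpr (by linarith [hΛnn x])
  have heq : Real.exp (-(Λ x)) * H x - Real.exp (-(Λ y)) * H y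
      = Real.exp (-(Λ x)) * (H x - H y)
        + (Real.exp (-(Λ x)) - Real.exp (-(Λ y))) * H y := by ring
  calc |Real.exp (-(Λ x)) * H x - Real.exp (-(Λ y)) * H y|
      ≤ |Real.exp (-(Λ x))| * |H x - H y|
        + |Real.exp (-(Λ x)) - Real.exp (-(Λ y))| * |H y| := by
        rw [heq, ← abs_mul, ← abs_mul]; exact abs_add_le _ _
    _ ≤ 1 * (Kstar * dist x y)
        + ((Ct * Klam + Kt * Clam) * dist x y) * CH := by
        refine add_le_add ?_ ?_
        · refine mul_le_mul ?_ (hHLip x y) (abs_nonneg _) zero_le_one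
          rw [abs_of_nonneg (Real.exp_nonneg _)]; exact hex
        · exact mul_le_mul ((exp_diff_le (hΛnn x) (hΛnn y)).trans (key' x y))
            (hHbd y) (abs_nonneg _)
            (le_trans (abs_nonneg _) ((exp_diff_le (hΛnn x) (hΛnn y)).trans (key' x y)))
    _ = (Kstar + CH * (Ct * Klam + Kt * Clam)) * dist x y := by ring
end

section
/- Let l : E × ℝ≥0 → ℝ be bounded by C_l and satisfy |l(ξ,u) − l(ξ',u)| ≤ [l]₁ d(ξ,ξ') for all admissible u, where ξ = (x,t) ranges over Ẽ = E × ℝ≥0 with metric d((x,t),(x',t')) = |x−x'| + |t−t'|, and the time coordinate evolves linearly: l evaluated along the flow at time u from (x,t) has time coordinate t+u. Define the truncated cost l̃((x,t),u) = l((x,t),u)·1_{t+u ≤ t_f}. Then for all ξ = (x,t), ξ' = (x',t') ∈ Ẽ and s ≥ 0 with s ≤ t̃*(ξ) ∧ t̃*(ξ') ≤ C_{t*}: ∫₀ˢ |l̃(ξ,u) − l̃(ξ',u)| du ≤ (C_{t*}[l]₁ + C_l)·d(ξ, ξ'). -/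
/-!
Write `l̃(ξ,u) - l̃(ξ',u) = (l(ξ,u) - l(ξ',u)) 1_{t'+u ≤ t_f} + l(ξ,u) (1_{t+u ≤ t_f} - 1_{t'+u ≤ t_f})`.
On `[0, s]` the first term integrates to at most `s [l]₁ d(ξ,ξ') ≤ C_{t*} [l]₁ d(ξ,ξ')`; the
second is at most `C_l` on the set where the two indicators differ, an interval of length
`|t - t'| ≤ d(ξ,ξ')`.
-/

open MeasureTheory Set

/-- Unlike `intervalIntegral.integral_mono_on`, no integrability of the smaller function is needed:
if it is not integrable its integral is `0`. -/
theorem intervalIntegral.integral_mono_on_of_nonneg {f g : ℝ → ℝ} {a b : ℝ} (hab : a ≤ b)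
    (hf : ∀ x ∈ Icc a b, 0 ≤ f x) (hg : IntervalIntegrable g volume a b)
    (h : ∀ x ∈ Icc a b, f x ≤ g x) :
    ∫ x in a..b, f x ≤ ∫ x in a..b, g x := by
  rw [intervalIntegral.integral_of_le hab, intervalIntegral.integral_of_le hab]
  exact integral_mono_of_nonneg
    (ae_restrict_of_forall_mem measurableSet_Ioc fun x hx => hf x (Ioc_subset_Icc_self hx)) hg.1
    (ae_restrict_of_forall_mem measurableSet_Ioc fun x hx => h x (Ioc_subset_Icc_self hx))

theorem abs_mul_sub_mul_le {x y c c' K C : ℝ} (hxy : |x - y| ≤ K) (hx : |x| ≤ C)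
    (hc' : |c'| ≤ 1) : |x * c - y * c'| ≤ K + C * |c - c'| :=
  calc |x * c - y * c'| = |(x - y) * c' + x * (c - c')| := by ring_nf
    _ ≤ |x - y| * 1 + C * |c - c'| := by
      refine (abs_add_le _ _).trans (add_le_add ?_ ?_) <;> rw [abs_mul]
      · exact mul_le_mul_of_nonneg_left hc' (abs_nonneg _)
      · exact mul_le_mul_of_nonneg_right hx (abs_nonneg _)
    _ ≤ K + C * |c - c'| := by rw [mul_one]; gcongr

theorem abs_ite_add_le_sub_ite_add_le (t t' c u : ℝ) :
    |(if t + u ≤ c then (1 : ℝ) else 0) - (if t' + u ≤ c then 1 else 0)|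
      = (Ioc (c - max t t') (c - min t t')).indicator 1 u := by
  simp only [indicator, mem_Ioc, Pi.one_apply]
  split_ifs <;> grind

theorem intervalIntegrable_abs_ite_add_le_sub_ite_add_le (t t' c a b : ℝ) :
    IntervalIntegrable
      (fun u => |(if t + u ≤ c then (1 : ℝ) else 0) - (if t' + u ≤ c then 1 else 0)|)
      volume a b := by
  simp only [abs_ite_add_le_sub_ite_add_le]
  exact ((integrable_indicator_iff measurableSet_Ioc).2
    (integrableOn_const measure_Ioc_lt_top.ne)).intervalIntegrable

/-- Shifting the start time by `t' - t` moves the switching time of `u ↦ 1_{t + u ≤ c}` by the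
same amount, so the two indicators differ on an interval of length `|t - t'|`. -/
theorem integral_abs_ite_add_le_sub_ite_add_le {a b : ℝ} (hab : a ≤ b) (t t' c : ℝ) :
    ∫ u in a..b, |(if t + u ≤ c then (1 : ℝ) else 0) - (if t' + u ≤ c then 1 else 0)|
      ≤ |t - t'| := by
  simp only [abs_ite_add_le_sub_ite_add_le]
  have hint : Integrable ((Ioc (c - max t t') (c - min t t')).indicator (1 : ℝ → ℝ)) :=
    (integrable_indicator_iff measurableSet_Ioc).2 (integrableOn_const measure_Ioc_lt_top.ne)
  calc ∫ u in a..b, (Ioc (c - max t t') (c - min t t')).indicator 1 u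
      ≤ ∫ u, (Ioc (c - max t t') (c - min t t')).indicator (1 : ℝ → ℝ) u := by
        rw [intervalIntegral.integral_of_le hab]
        exact setIntegral_le_integral hint (Filter.Eventually.of_forall fun u => indicator_nonneg
          (fun _ _ => zero_le_one) u)
    _ = |t - t'| := by
        rw [integral_indicator_one measurableSet_Ioc, Real.volume_real_Ioc,
          sub_sub_sub_cancel_left, max_sub_min_eq_abs', max_eq_left (abs_nonneg _)]

theorem stmt14_general {E : Type*} [MetricSpace E] (tf Ct Cl Kl : ℝ)
    (tstar : E × ℝ → ℝ) (htbd : ∀ ξ, tstar ξ ≤ Ct)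
    (l : E × ℝ → ℝ → ℝ)
    (hlbd : ∀ ξ u, |l ξ u| ≤ Cl)
    (hlLip : ∀ (ξ ξ' : E × ℝ) (u : ℝ), 0 ≤ u → u ≤ min (tstar ξ) (tstar ξ') →
      |l ξ u - l ξ' u| ≤ Kl * (dist ξ.1 ξ'.1 + |ξ.2 - ξ'.2|)) :
    ∀ (ξ ξ' : E × ℝ) (s : ℝ), 0 ≤ s → s ≤ min (tstar ξ) (tstar ξ') →
      (∫ u in (0:ℝ)..s,
        |l ξ u * (if ξ.2 + u ≤ tf then (1:ℝ) else 0)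
          - l ξ' u * (if ξ'.2 + u ≤ tf then (1:ℝ) else 0)|)
      ≤ (Ct * Kl + Cl) * (dist ξ.1 ξ'.1 + |ξ.2 - ξ'.2|) := by
  intro ξ ξ' s hs hsle
  set D := dist ξ.1 ξ'.1 + |ξ.2 - ξ'.2|
  set χ : ℝ → ℝ := fun u => if ξ.2 + u ≤ tf then 1 else 0
  set χ' : ℝ → ℝ := fun u => if ξ'.2 + u ≤ tf then 1 else 0
  have hKlD : 0 ≤ Kl * D := (abs_nonneg _).trans (hlLip ξ ξ' 0 le_rfl (hs.trans hsle))
  have hCl : 0 ≤ Cl := (abs_nonneg _).trans (hlbd ξ 0)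
  have hsCt : s ≤ Ct := hsle.trans ((min_le_left _ _).trans (htbd ξ))
  have hpt : ∀ u ∈ Icc 0 s, |l ξ u * χ u - l ξ' u * χ' u| ≤ Kl * D + Cl * |χ u - χ' u| :=
    fun u hu => abs_mul_sub_mul_le (hlLip ξ ξ' u hu.1 (hu.2.trans hsle)) (hlbd ξ u)
      (by simp only [χ']; split_ifs <;> norm_num)
  have hδ : ∫ u in (0:ℝ)..s, |χ u - χ' u| ≤ D :=
    (integral_abs_ite_add_le_sub_ite_add_le hs _ _ _).trans (le_add_of_nonneg_left dist_nonneg)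
  have hδint := intervalIntegrable_abs_ite_add_le_sub_ite_add_le ξ.2 ξ'.2 tf 0 s
  calc ∫ u in (0:ℝ)..s, |l ξ u * χ u - l ξ' u * χ' u|
      ≤ ∫ u in (0:ℝ)..s, (Kl * D + Cl * |χ u - χ' u|) :=
        intervalIntegral.integral_mono_on_of_nonneg hs (fun _ _ => abs_nonneg _)
          (intervalIntegrable_const.add (hδint.const_mul Cl)) hpt
    _ = s * (Kl * D) + Cl * ∫ u in (0:ℝ)..s, |χ u - χ' u| := by
        rw [intervalIntegral.integral_add intervalIntegrable_const (hδint.const_mul Cl),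
          intervalIntegral.integral_const, intervalIntegral.integral_const_mul, sub_zero,
          smul_eq_mul]
    _ ≤ Ct * (Kl * D) + Cl * D := by gcongr
    _ = (Ct * Kl + Cl) * D := by ring

theorem stmt14 {E : Type*} [MetricSpace E] (tf Ct Cl Kl : ℝ)
    (tstar : E × ℝ → ℝ) (htnn : ∀ ξ, 0 ≤ tstar ξ) (htbd : ∀ ξ, tstar ξ ≤ Ct)
    (l : E × ℝ → ℝ → ℝ)
    (hlbd : ∀ ξ u, |l ξ u| ≤ Cl)
    (hlLip : ∀ (ξ ξ' : E × ℝ) (u : ℝ), 0 ≤ u → u ≤ min (tstar ξ) (tstar ξ') →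
      |l ξ u - l ξ' u| ≤ Kl * (dist ξ.1 ξ'.1 + |ξ.2 - ξ'.2|)) :
    ∀ (ξ ξ' : E × ℝ) (s : ℝ), 0 ≤ s → s ≤ min (tstar ξ) (tstar ξ') →
      (∫ u in (0:ℝ)..s,
        |l ξ u * (if ξ.2 + u ≤ tf then (1:ℝ) else 0)
          - l ξ' u * (if ξ'.2 + u ≤ tf then (1:ℝ) else 0)|)
      ≤ (Ct * Kl + Cl) * (dist ξ.1 ξ'.1 + |ξ.2 - ξ'.2|) :=
  stmt14_general tf Ct Cl Kl tstar htbd l hlbd hlLip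
end

section
/- Let w : Ẽ → ℝ where Ẽ = E × ℝ≥0, and suppose w is Lipschitz along the time-augmented flow Φ̃((x,t),s) = (Φ(x,s), t+s) with constants [w]₁ (space) and [w]₂ (time) up to time u. For fixed t ≥ 0 define w_t : E → ℝ by w_t(x) = w(x,t). Then w_t is Lipschitz along the flow Φ up to time t ∧ u with space-Lipschitz constant [w_t]₁ ≤ [w]₁ and time-Lipschitz constant [w_t]₂ ≤ [w]₁ + [w]₂. Specifically: (i) for x, x' ∈ E and s ≤ t*(x) ∧ t*(x') ∧ t ∧ u, |w_t(Φ(x,s)) − w_t(Φ(x',s))| ≤ [w]₁|x − x'|; (ii) for x ∈ E and s, s' ≤ t*(x) ∧ t ∧ u, |w_t(Φ(x,s)) − w_t(Φ(x,s'))| ≤ ([w]₁ + [w]₂)|s − s'|. -/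
theorem stmt16 {E : Type*} [MetricSpace E] (Φ : E → ℝ → E) (tstar : E → ℝ)
    (htnn : ∀ x, 0 ≤ tstar x)
    (w : E × ℝ → ℝ) (u K1 K2 : ℝ) (hu : 0 ≤ u)
    (hw1 : ∀ (x x' : E) (t t' : ℝ), 0 ≤ t → 0 ≤ t' → ∀ s, 0 ≤ s →
      s ≤ tstar x → s ≤ tstar x' → s ≤ u →
      |w (Φ x s, t + s) - w (Φ x' s, t' + s)| ≤ K1 * (dist x x' + |t - t'|))
    (hw2 : ∀ (x : E) (t : ℝ), 0 ≤ t → ∀ s s', 0 ≤ s → s ≤ tstar x → s ≤ u →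
      0 ≤ s' → s' ≤ tstar x → s' ≤ u →
      |w (Φ x s, t + s) - w (Φ x s', t + s')| ≤ K2 * |s - s'|)
    (t : ℝ) (ht : 0 ≤ t) :
    (∀ (x x' : E) (s : ℝ), 0 ≤ s → s ≤ tstar x → s ≤ tstar x' → s ≤ t → s ≤ u →
      |w (Φ x s, t) - w (Φ x' s, t)| ≤ K1 * dist x x') ∧
    (∀ (x : E) (s s' : ℝ), 0 ≤ s → s ≤ tstar x → s ≤ t → s ≤ u →
      0 ≤ s' → s' ≤ tstar x → s' ≤ t → s' ≤ u →
      |w (Φ x s, t) - w (Φ x s', t)| ≤ (K1 + K2) * |s - s'|) := by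
  constructor
  · intro x x' s hs hsx hsx' hst hsu
    have h := hw1 x x' (t - s) (t - s) (by linarith) (by linarith) s hs hsx hsx' hsu
    simp only [sub_add_cancel, sub_self, abs_zero, add_zero] at h
    exact h
  · intro x s s' hs hsx hst hsu hs' hsx' hst' hsu'
    have h1 := hw2 x (t - s) (by linarith) s s' hs hsx hsu hs' hsx' hsu'
    have h2 := hw1 x x (t - s) (t - s') (by linarith) (by linarith) s' hs' hsx' hsx' hsu'
    simp only [dist_self, zero_add] at h2
    have e1 : t - s + s = t := by ring
    have e2 : t - s' + s' = t := by ring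
    rw [e1] at h1
    rw [e2] at h2
    have e3 : |t - s - (t - s')| = |s - s'| := by
      rw [show t - s - (t - s') = s' - s by ring, abs_sub_comm]
    rw [e3] at h2
    calc |w (Φ x s, t) - w (Φ x s', t)|
        ≤ |w (Φ x s, t) - w (Φ x s', t - s + s')| + |w (Φ x s', t - s + s') - w (Φ x s', t)| := abs_sub_le _ _ _
      _ ≤ K2 * |s - s'| + K1 * |s - s'| := add_le_add h1 h2
      _ = (K1 + K2) * |s - s'| := by ring
end
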